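/- Fix q ≥ 2 and let φ_cw : ℂ^{q+1} × ℂ^{q+1} → ℂ^{q+1} be the easy Coppersmith–Winograd bilinear map. Then for every n ≥ 1, bR(φ_cw^{⊗n}) ≥ (q + 1)ⁿ + 2ⁿ − 1, where φ_cw^{⊗n} denotes the n-fold tensor product of φ_cw with itself. -/

import Mathlib

open scoped BigOperators

/-- A tensor (structure-constant array of a bilinear map) is a sum of `r`
decomposable tensors, i.e. has rank at most `r`. -/
def rankLE {I J K : Type*} (T : I → J → K → ℂ) (r : ℕ) : Prop :=
  ∃ u : Fin r → I → ℂ, ∃ v : Fin r → J → ℂ, ∃ w : Fin r → K → ℂ,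
    T = fun i j k => ∑ s, u s i * v s j * w s k

/-- The border rank: the least `r` such that `T` is a limit of tensors of rank
at most `r`. -/
noncomputable def bRank {I J K : Type*} (T : I → J → K → ℂ) : ℕ :=
  sInf {r | T ∈ closure {S | rankLE S r}}

/-- The easy Coppersmith–Winograd bilinear map
`φ_cw(a, b) = (Σᵢ aᵢbᵢ) e₀ + Σᵢ (a₀bᵢ + aᵢb₀) eᵢ` on `ℂ^{q+1}`,
as a structure-constant array. -/
noncomputable def cwArr (q : ℕ) : Fin (q + 1) → Fin (q + 1) → Fin (q + 1) → ℂ :=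
  fun i j k =>
    if k = 0 then (if i = j ∧ i ≠ 0 then 1 else 0)
    else (if i = 0 ∧ j = k then 1 else 0) + (if i = k ∧ j = 0 then 1 else 0)

/-- The `n`-fold tensor power `φ_cw^{⊗n}`, in coordinates. -/
noncomputable def cwPow (q n : ℕ) :
    (Fin n → Fin (q + 1)) → (Fin n → Fin (q + 1)) → (Fin n → Fin (q + 1)) → ℂ :=
  fun i j k => ∏ t, cwArr q (i t) (j t) (k t)

/-!
Border substitution. Put `m = (q + 1)ⁿ` and `p = 2ⁿ - 1`. Every slice `φ_cw^{⊗n}(·, b)` with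
`b ≠ 0` has rank at least `2ⁿ = p + 1`: splitting off the first tensor factor, such a slice
contains a block-triangular submatrix `[[Z, 0], [C, Z]]` whose diagonal block `Z` is a nonzero
slice of `φ_cw^{⊗(n-1)}` (finding it uses `q ≥ 2`).

Now let `S_k → T := φ_cw^{⊗n}` with `S_k` a sum of `r` decomposable tensors. For each `k` pick
an `(m - p) × m` matrix `Q_k` with orthonormal rows that kills the first-factor vectors of
`min(p, r)` of the terms of `S_k`; by compactness `Q_k → Q` along a subsequence. Since `ker Q`
has dimension `p` and slices of `T` have rank `> p`, no nonzero slice is killed by `Q`, so the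
flattening of `Q · T` along the middle factor is injective, of rank `m`. Rank is lower
semicontinuous, and the flattening of `Q_k · S_k` has rank at most `r - min(p, r)`; hence
`r ≥ m + p`.
-/

open Matrix Filter Topology

theorem Submodule.finrank_map_add_finrank_inf_ker {K V W : Type*} [Field K] [AddCommGroup V]
    [Module K V] [AddCommGroup W] [Module K W] [FiniteDimensional K V]
    (f : V →ₗ[K] W) (S : Submodule K V) :
    Module.finrank K (S.map f) + Module.finrank K ↥(S ⊓ LinearMap.ker f) =
      Module.finrank K S := by
  have hker : (LinearMap.ker f).comap S.subtype = (S ⊓ LinearMap.ker f).comap S.subtype := by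
    rw [Submodule.comap_inf, Submodule.comap_subtype_self, top_inf_eq]
  rw [← LinearMap.range_domRestrict, ← (f.domRestrict S).finrank_range_add_finrank_ker,
    LinearMap.ker_domRestrict, hker, (Submodule.comapSubtypeEquivOfLe inf_le_left).finrank_eq]

theorem Matrix.rank_add_rank_le_rank_fromBlocks {R l m n o : Type*} [Field R] [Fintype l]
    [Fintype m] [Fintype n] [Fintype o] (A : Matrix n l R) (C : Matrix o l R) (D : Matrix o m R) :
    A.rank + D.rank ≤ (fromBlocks A 0 C D).rank := by
  set S := LinearMap.range (fromBlocks A 0 C D).mulVecLin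
  set top := LinearMap.funLeft R R (Sum.inl : n → n ⊕ o)
  have hA : LinearMap.range A.mulVecLin ≤ S.map top := by
    rintro _ ⟨x, rfl⟩
    exact ⟨_, ⟨Sum.elim x 0, rfl⟩, by ext; simp [top, LinearMap.funLeft, fromBlocks_mulVec]⟩
  have hD : LinearMap.range D.mulVecLin ≤
      (S ⊓ LinearMap.ker top).map (LinearMap.funLeft R R Sum.inr) := by
    rintro _ ⟨y, rfl⟩
    refine ⟨_, ⟨⟨Sum.elim 0 y, rfl⟩, ?_⟩, ?_⟩ <;>
      ext <;> simp [top, LinearMap.funLeft, fromBlocks_mulVec]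
  calc A.rank + D.rank
      ≤ Module.finrank R (S.map top) + Module.finrank R ↥(S ⊓ LinearMap.ker top) :=
        add_le_add (Submodule.finrank_mono hA)
          ((Submodule.finrank_mono hD).trans (Submodule.finrank_map_le _ _))
    _ = (fromBlocks A 0 C D).rank := Submodule.finrank_map_add_finrank_inf_ker _ S

theorem Matrix.eventually_card_le_rank {ι m n : Type*} [Fintype m] [Fintype n]
    {l : Filter ι} {M : ι → Matrix m n ℂ} {M₀ : Matrix m n ℂ} (hM : Tendsto M l (𝓝 M₀))
    (hM₀ : Function.Injective M₀.mulVec) : ∀ᶠ k in l, Fintype.card n ≤ (M k).rank := by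
  classical
  obtain ⟨g, hg⟩ := M₀.mulVecLin.exists_leftInverse_of_injective
    (LinearMap.ker_eq_bot.2 hM₀)
  have hL : LinearMap.toMatrix' g * M₀ = 1 := by
    rw [← LinearMap.toMatrix'_toLin' M₀, ← LinearMap.toMatrix'_comp]
    simp [Matrix.toLin'_apply', hg]
  have hdet : Tendsto (fun k => (LinearMap.toMatrix' g * M k).det) l (𝓝 1) := by
    have hcont : Continuous fun A : Matrix m n ℂ => (LinearMap.toMatrix' g * A).det :=
      (continuous_const.matrix_mul continuous_id).matrix_det
    have := (hcont.tendsto M₀).comp hM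
    rwa [hL, det_one] at this
  filter_upwards [hdet.eventually_ne one_ne_zero] with k hk
  calc Fintype.card n = (LinearMap.toMatrix' g * M k).rank := (rank_of_det_ne_zero hk).symm
    _ ≤ (M k).rank := rank_mul_le_right _ _

theorem isCompact_setOf_mul_conjTranspose_eq_one {m n : Type*} [Fintype m] [Fintype n]
    [DecidableEq m] : IsCompact {Q : Matrix m n ℂ | Q * Qᴴ = 1} := by
  have hclosed : IsClosed {Q : Matrix m n ℂ | Q * Qᴴ = 1} :=
    isClosed_eq (continuous_id.matrix_mul continuous_id.matrix_conjTranspose) continuous_const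
  refine (isCompact_univ_pi fun _ => isCompact_univ_pi fun _ =>
    isCompact_closedBall (0 : ℂ) 1).of_isClosed_subset hclosed
      fun (Q : Matrix m n ℂ) hQ x _ i _ => ?_
  have hrow : ∑ j, ‖Q x j‖ ^ 2 = (1 : ℝ) := by
    have hxx : (Q * Qᴴ) x x = 1 := by rw [hQ, one_apply_eq]
    simp only [mul_apply, conjTranspose_apply, RCLike.star_def, Complex.mul_conj'] at hxx
    exact_mod_cast hxx
  rw [Metric.mem_closedBall, dist_zero_right, ← sq_le_one_iff₀ (norm_nonneg _), ← hrow]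
  exact Finset.single_le_sum (fun j _ => sq_nonneg ‖Q x j‖) (Finset.mem_univ i)

theorem exists_mul_conjTranspose_eq_one_mulVec_eq_zero {ι I : Type*} [Fintype I]
    (u : ι → I → ℂ) (F : Finset ι) {d : ℕ} (hd : d + F.card ≤ Fintype.card I) :
    ∃ Q : Matrix (Fin d) I ℂ, Q * Qᴴ = 1 ∧ ∀ s ∈ F, Q *ᵥ u s = 0 := by
  classical
  set W : Submodule ℂ (EuclideanSpace ℂ I) :=
    Submodule.span ℂ ↑(F.image fun s => WithLp.toLp 2 (star (u s)))
  have hdim : d ≤ Module.finrank ℂ Wᗮ := by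
    have h1 := W.finrank_add_finrank_orthogonal
    have h2 : Module.finrank ℂ W ≤ F.card :=
      (finrank_span_finset_le_card _).trans Finset.card_image_le
    rw [finrank_euclideanSpace] at h1
    omega
  set b := stdOrthonormalBasis ℂ Wᗮ
  have hb : Orthonormal ℂ fun x : Fin d => (b (Fin.castLE hdim x) : EuclideanSpace ℂ I) :=
    (b.orthonormal.comp _ (Fin.castLE_injective hdim)).comp_linearIsometry Wᗮ.subtypeₗᵢ
  refine ⟨of fun x i => (b (Fin.castLE hdim x) : EuclideanSpace ℂ I) i, ?_, fun s hs => ?_⟩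
  · ext x y
    have := orthonormal_iff_ite.mp hb y x
    simpa [mul_apply, one_apply, PiLp.inner_apply, mul_comm, eq_comm] using this
  · ext x
    have := Submodule.inner_right_of_mem_orthogonal
      (Submodule.subset_span (Finset.mem_coe.2 (Finset.mem_image_of_mem _ hs)))
      (b (Fin.castLE hdim x)).2
    simpa [mulVec, dotProduct, PiLp.inner_apply, mul_comm] using this

/-- The slice `φ(·, b)` of the bilinear map `φ` with structure tensor `T`, as an `I × K` matrix. -/
def midContract {I J K : Type*} [Fintype J] (T : I → J → K → ℂ) (b : J → ℂ) : Matrix I K ℂ :=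
  of fun i k => ∑ j, b j * T i j k

section Flattening

variable {X I J K : Type*}

def leftContract [Fintype I] (Q : Matrix X I ℂ) (T : I → J → K → ℂ) : X → J → K → ℂ :=
  fun x j k => ∑ i, Q x i * T i j k

def midFlatten (T : X → J → K → ℂ) : Matrix (X × K) J ℂ :=
  of fun p j => T p.1 j p.2

theorem midFlatten_leftContract_mulVec [Fintype I] [Fintype J] (Q : Matrix X I ℂ)
    (T : I → J → K → ℂ) (b : J → ℂ) :
    midFlatten (leftContract Q T) *ᵥ b = fun p => (Q * midContract T b) p.1 p.2 := by
  ext ⟨x, k⟩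
  simp only [midFlatten, leftContract, midContract, mulVec, dotProduct, mul_apply, of_apply,
    Finset.sum_mul, Finset.mul_sum]
  rw [Finset.sum_comm]
  exact Finset.sum_congr rfl fun _ _ => Finset.sum_congr rfl fun _ _ => by ring

theorem injective_midFlatten_leftContract_mulVec [Fintype X] [Fintype I] [Fintype J] [Fintype K]
    {Q : Matrix X I ℂ} {T : I → J → K → ℂ} {p : ℕ}
    (hQ : Fintype.card I ≤ Q.rank + p) (hp : ∀ b ≠ 0, p < (midContract T b).rank) :
    Function.Injective (midFlatten (leftContract Q T)).mulVec := by
  rw [← Matrix.coe_mulVecLin, ← LinearMap.ker_eq_bot, LinearMap.ker_eq_bot']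
  intro b hb
  by_contra hb0
  have hmul : Q * midContract T b = 0 := by
    ext x k
    exact congrFun ((midFlatten_leftContract_mulVec Q T b).symm.trans hb) (x, k)
  have := rank_add_rank_le_card_of_mul_eq_zero hmul
  have := hp b hb0
  omega

theorem midFlatten_leftContract_sum {σ : Type*} [Fintype I] [Fintype σ] (Q : Matrix X I ℂ)
    (u : σ → I → ℂ) (v : σ → J → ℂ) (w : σ → K → ℂ) :
    midFlatten (leftContract Q fun i j k => ∑ s, u s i * v s j * w s k) =
      of (fun p s => (Q *ᵥ u s) p.1 * w s p.2) * of v := by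
  ext ⟨x, k⟩ j
  simp only [midFlatten, leftContract, mulVec, dotProduct, mul_apply, of_apply,
    Finset.sum_mul, Finset.mul_sum]
  rw [Finset.sum_comm]
  exact Finset.sum_congr rfl fun _ _ => Finset.sum_congr rfl fun _ _ => by ring

theorem rank_midFlatten_leftContract_sum_le {σ : Type*} [Fintype X] [Fintype I] [Fintype J]
    [Fintype K] [Fintype σ] [DecidableEq σ]
    {Q : Matrix X I ℂ} {u : σ → I → ℂ} (v : σ → J → ℂ) (w : σ → K → ℂ) {F : Finset σ}
    (hQ : ∀ s ∈ F, Q *ᵥ u s = 0) :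
    (midFlatten (leftContract Q fun i j k => ∑ s, u s i * v s j * w s k)).rank ≤ Fᶜ.card := by
  rw [midFlatten_leftContract_sum]
  refine (rank_mul_le_left _ _).trans ((rank_transpose _).symm.le.trans ?_)
  refine rank_le_card_of_support_subset _ _ fun s hs =>
    Finset.mem_coe.2 <| Finset.mem_compl.2 fun hsF => hs ?_
  ext p
  simp [hQ s hsF]

theorem continuous_midFlatten_leftContract [Fintype I] :
    Continuous fun QT : Matrix X I ℂ × (I → J → K → ℂ) =>
      midFlatten (leftContract QT.1 QT.2) := by
  unfold midFlatten leftContract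
  fun_prop

end Flattening

theorem rankLE_sum {I J K σ : Type*} [Fintype σ] (u : σ → I → ℂ) (v : σ → J → ℂ)
    (w : σ → K → ℂ) :
    rankLE (fun i j k => ∑ s, u s i * v s j * w s k) (Fintype.card σ) := by
  set e := (Fintype.equivFin σ).symm
  exact ⟨fun s => u (e s), fun s => v (e s), fun s => w (e s), by
    ext i j k; exact (e.sum_comp fun s => u s i * v s j * w s k).symm⟩

theorem rankLE_card_prod {I J K : Type*} [Fintype I] [Fintype J] (T : I → J → K → ℂ) :
    rankLE T (Fintype.card (I × J)) := by
  classical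
  convert rankLE_sum (fun p : I × J => Pi.single p.1 (1 : ℂ)) (fun p => Pi.single p.2 (1 : ℂ))
    fun p => T p.1 p.2 using 1
  ext i j k
  simp [Fintype.sum_prod_type, Pi.single_apply]

theorem le_bRank_of_forall_mem_closure {I J K : Type*} [Fintype I] [Fintype J]
    {T : I → J → K → ℂ} {N : ℕ} (h : ∀ r, T ∈ closure {S | rankLE S r} → N ≤ r) :
    N ≤ bRank T :=
  h _ (Nat.sInf_mem (s := {r | T ∈ closure {S | rankLE S r}})
    ⟨_, subset_closure (rankLE_card_prod T)⟩)

theorem card_add_le_of_mem_closure {I J K : Type*} [Fintype I] [Fintype J] [Fintype K]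
    [Nonempty J]
    {T : I → J → K → ℂ} {p r : ℕ} (hp : ∀ b ≠ 0, p < (midContract T b).rank)
    (hr : T ∈ closure {S | rankLE S r}) : Fintype.card J + p ≤ r := by
  classical
  have hpI : p < Fintype.card I :=
    (hp (Pi.single (Classical.arbitrary J) 1) (Pi.single_ne_zero_iff.2 one_ne_zero)).trans_le
      (rank_le_card_height _)
  obtain ⟨S, hS, hST⟩ := mem_closure_iff_seq_limit.mp hr
  choose u v w hdec using hS
  obtain ⟨F, -, hF⟩ := Finset.exists_subset_card_eq (s := (Finset.univ : Finset (Fin r)))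
    (n := min p r) (by simp)
  choose Q hQ hQu using fun k => exists_mul_conjTranspose_eq_one_mulVec_eq_zero (u k) F
    (d := Fintype.card I - p) (by omega)
  -- instance search does not see through `Matrix` to the product topology
  have : FirstCountableTopology (Matrix (Fin (Fintype.card I - p)) I ℂ) :=
    inferInstanceAs (FirstCountableTopology (Fin _ → I → ℂ))
  obtain ⟨Q₀, hQ₀, φ, hφ, hQlim⟩ := isCompact_setOf_mul_conjTranspose_eq_one.tendsto_subseq hQ
  have hrank : Fintype.card I - p ≤ Q₀.rank := by
    simpa [show Q₀ * Q₀ᴴ = 1 from hQ₀] using rank_mul_le_left Q₀ Q₀ᴴ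
  have hlim := (continuous_midFlatten_leftContract.tendsto (Q₀, T)).comp
    (hQlim.prodMk_nhds (hST.comp hφ.tendsto_atTop))
  obtain ⟨k, hk⟩ := (eventually_card_le_rank hlim
    (injective_midFlatten_leftContract_mulVec (Q := Q₀) (by omega) hp)).exists
  have hle : _ ≤ Fᶜ.card :=
    rank_midFlatten_leftContract_sum_le (v (φ k)) (w (φ k)) (hQu (φ k))
  simp only [Function.comp_apply, hdec] at hk
  rw [Finset.card_compl, Fintype.card_fin, hF] at hle
  have := Fintype.card_pos (α := J)
  omega

theorem card_add_le_bRank {I J K : Type*} [Fintype I] [Fintype J] [Fintype K] [Nonempty J]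
    {T : I → J → K → ℂ} {p : ℕ} (hp : ∀ b ≠ 0, p < (midContract T b).rank) :
    Fintype.card J + p ≤ bRank T :=
  le_bRank_of_forall_mem_closure fun _ => card_add_le_of_mem_closure hp

theorem sum_cwArr_mul (q : ℕ) (a c : Fin (q + 1)) (X : Fin (q + 1) → ℂ) :
    ∑ j, cwArr q a j c * X j =
      if c = 0 then (if a = 0 then 0 else X a)
      else if a = 0 then X c else if a = c then X 0 else 0 := by
  unfold cwArr
  split_ifs <;> simp_all [eq_comm]

theorem two_mul_rank_le_of_cons_blocks {α β : Type*} {n : ℕ} [Fintype α] [Fintype β]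
    (M : Matrix (Fin (n + 1) → α) (Fin (n + 1) → β) ℂ) (Z : Matrix (Fin n → α) (Fin n → β) ℂ)
    (a₁ a₂ : α) (c₁ c₂ : β) (h₁₁ : ∀ i k, M (Fin.cons a₁ i) (Fin.cons c₁ k) = Z i k)
    (h₁₂ : ∀ i k, M (Fin.cons a₁ i) (Fin.cons c₂ k) = 0)
    (h₂₂ : ∀ i k, M (Fin.cons a₂ i) (Fin.cons c₂ k) = Z i k) :
    2 * Z.rank ≤ M.rank := by
  set C : Matrix (Fin n → α) (Fin n → β) ℂ := of fun i k => M (Fin.cons a₂ i) (Fin.cons c₁ k)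
  have hblocks : M.submatrix (Sum.elim (Fin.cons a₁) (Fin.cons a₂))
      (Sum.elim (Fin.cons c₁) (Fin.cons c₂)) = fromBlocks Z 0 C Z := by
    ext (i | i) (k | k) <;> simp [C, h₁₁, h₁₂, h₂₂]
  calc 2 * Z.rank = Z.rank + Z.rank := two_mul _
    _ ≤ (fromBlocks Z 0 C Z).rank := rank_add_rank_le_rank_fromBlocks _ _ _
    _ ≤ M.rank := hblocks ▸ rank_submatrix_le _ _ _

theorem cwPow_succ_cons (q n : ℕ) (a j c : Fin (q + 1)) (i' j' k' : Fin n → Fin (q + 1)) :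
    cwPow q (n + 1) (Fin.cons a i') (Fin.cons j j') (Fin.cons c k') =
      cwArr q a j c * cwPow q n i' j' k' := by
  simp [cwPow, Fin.prod_univ_succ]

theorem midContract_cwPow_succ_cons (q n : ℕ) (b : (Fin (n + 1) → Fin (q + 1)) → ℂ)
    (a c : Fin (q + 1)) (i k : Fin n → Fin (q + 1)) :
    midContract (cwPow q (n + 1)) b (Fin.cons a i) (Fin.cons c k) =
      ∑ j, cwArr q a j c * midContract (cwPow q n) (fun j' => b (Fin.cons j j')) i k := by
  simp only [midContract, of_apply, Finset.mul_sum]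
  rw [← (Fin.consEquiv fun _ => Fin (q + 1)).sum_comp, Fintype.sum_prod_type]
  refine Finset.sum_congr rfl fun j _ => Finset.sum_congr rfl fun j' _ => ?_
  change b (Fin.cons j j') * cwPow q (n + 1) (Fin.cons a i) (Fin.cons j j') (Fin.cons c k) = _
  rw [cwPow_succ_cons]
  ring

theorem two_pow_le_rank_midContract_cwPow {q : ℕ} (hq : 2 ≤ q) (n : ℕ)
    (b : (Fin n → Fin (q + 1)) → ℂ) (hb : b ≠ 0) :
    2 ^ n ≤ (midContract (cwPow q n) b).rank := by
  induction n with
  | zero =>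
    obtain ⟨j, hj⟩ : ∃ j, b j ≠ 0 := Function.ne_iff.mp hb
    have hdet : (midContract (cwPow q 0) b).det ≠ 0 := by
      simp only [midContract, cwPow, det_unique, of_apply, Fintype.sum_unique,
        Finset.univ_eq_empty, Finset.prod_empty, mul_one]
      convert hj
    simp [rank_of_det_ne_zero hdet]
  | succ n ih =>
    obtain ⟨j, hj⟩ : ∃ j, b j ≠ 0 := Function.ne_iff.mp hb
    set N : Fin (q + 1) → Matrix (Fin n → Fin (q + 1)) (Fin n → Fin (q + 1)) ℂ :=
      fun a => midContract (cwPow q n) (fun j' => b (Fin.cons a j'))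
    have hN : 2 ^ n ≤ (N (j 0)).rank := ih _ fun h => hj (by
      simpa [Fin.cons_self_tail] using congrFun h (Fin.tail j))
    have hentry := fun a c i k => (midContract_cwPow_succ_cons q n b a c i k).trans
      (sum_cwArr_mul q a c fun a' => N a' i k)
    rw [pow_succ, mul_comm]
    refine le_trans (Nat.mul_le_mul_left 2 hN) ?_
    set M := midContract (cwPow q (n + 1)) b
    rcases eq_or_ne (j 0) 0 with h0 | h0
    · refine two_mul_rank_le_of_cons_blocks M (N (j 0)) ⟨1, by omega⟩ ⟨2, by omega⟩
        ⟨1, by omega⟩ ⟨2, by omega⟩ ?_ ?_ ?_ <;> intro i k <;> simp [M, hentry, Fin.ext_iff, h0]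
    · exact two_mul_rank_le_of_cons_blocks M (N (j 0)) 0 (j 0) (j 0) 0
        (by simp [M, hentry, h0]) (by simp [M, hentry]) (by simp [M, hentry, h0])

theorem stmt13_general (q n : ℕ) (hq : 2 ≤ q) :
    (q + 1) ^ n + 2 ^ n - 1 ≤ bRank (cwPow q n) := by
  have := card_add_le_bRank (T := cwPow q n) (p := 2 ^ n - 1) fun b hb =>
    Nat.sub_one_lt_of_le (Nat.two_pow_pos n) (two_pow_le_rank_midContract_cwPow hq n b hb)
  simp only [Fintype.card_fun, Fintype.card_fin] at this
  have := Nat.one_le_two_pow (n := n)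
  omega

/-- for `q ≥ 2` and `n ≥ 1`,
`bR(φ_cw^{⊗n}) ≥ (q + 1)ⁿ + 2ⁿ − 1`. -/
theorem stmt13 (q n : ℕ) (hq : 2 ≤ q) (hn : 1 ≤ n) :
    (q + 1) ^ n + 2 ^ n - 1 ≤ bRank (cwPow q n) :=
  stmt13_general q n hq
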